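/- Let c₁ = a³, c₂ = b³, c₃ = c³, c₄ = a(b²−c²), c₅ = b(a²−c²), c₆ = c(a²−b²) in ℂ[a,b,c] (the six cubics defining the companion B₃ surface X_{B₃}'), and for (α,β,γ) ∈ ℂ³ let H(α,β,γ) be the 6×6 matrix whose (i,j)-entry is the second-order partial derivative of cᵢ with respect to the j-th of the six pairs (a,a), (b,b), (c,c), (a,b), (a,c), (b,c), evaluated at (α,β,γ). Then det H(α,β,γ) = 0 for all (α,β,γ) ∈ ℂ³; i.e. the companion surface X_{B₃}' is hypo-osculating, satisfying at least one Laplace equation of order 2. -/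
import Mathlib


open MvPolynomial

/-- The six cubics a³, b³, c³, a(b²−c²), b(a²−c²), c(a²−b²) defining the
companion B₃ surface (variables a, b, c as X 0, X 1, X 2). -/
noncomputable def companionCubics : Fin 6 → MvPolynomial (Fin 3) ℂ :=
  ![X 0 ^ 3, X 1 ^ 3, X 2 ^ 3,
    X 0 * (X 1 ^ 2 - X 2 ^ 2), X 1 * (X 0 ^ 2 - X 2 ^ 2), X 2 * (X 0 ^ 2 - X 1 ^ 2)]

/-- The six unordered pairs of variables (a,a),(b,b),(c,c),(a,b),(a,c),(b,c). -/
def varPairs : Fin 6 → Fin 3 × Fin 3 :=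
  ![(0, 0), (1, 1), (2, 2), (0, 1), (0, 2), (1, 2)]

/-- The 6×6 matrix of all second-order partial derivatives of the six companion
cubics, evaluated at a point of ℂ³. -/
noncomputable def companionHessian (v : Fin 3 → ℂ) : Matrix (Fin 6) (Fin 6) ℂ :=
  Matrix.of fun i j =>
    eval v (pderiv (varPairs j).1 (pderiv (varPairs j).2 (companionCubics i)))

@[simp] lemma vec6_five {α : Type*} (a b c d e f : α) :
    (![a, b, c, d, e, f] : Fin 6 → α) 5 = f := rfl

@[simp] lemma cons_val_two' {α : Type*} {n : ℕ} (a : α) (f : Fin (n+2) → α) :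
    Matrix.vecCons a f 2 = f 1 := rfl

@[simp] lemma cons_val_three' {α : Type*} {n : ℕ} (a : α) (f : Fin (n+3) → α) :
    Matrix.vecCons a f 3 = f 2 := rfl

@[simp] lemma cons_val_four' {α : Type*} {n : ℕ} (a : α) (f : Fin (n+4) → α) :
    Matrix.vecCons a f 4 = f 3 := rfl

@[simp] lemma cons_val_five' {α : Type*} {n : ℕ} (a : α) (f : Fin (n+5) → α) :
    Matrix.vecCons a f 5 = f 4 := rfl

lemma pd_two (i : Fin 3) : pderiv i (2 : MvPolynomial (Fin 3) ℂ) = 0 := by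
  rw [← map_ofNat (C : ℂ →+* MvPolynomial (Fin 3) ℂ) 2, pderiv_C]

lemma pd_three (i : Fin 3) : pderiv i (3 : MvPolynomial (Fin 3) ℂ) = 0 := by
  rw [← map_ofNat (C : ℂ →+* MvPolynomial (Fin 3) ℂ) 3, pderiv_C]

set_option maxHeartbeats 4000000 in
set_option maxRecDepth 8000 in
lemma det_aux (α β γ : ℂ) :
    (Matrix.of ![![6*α, 0, 0, 0, 0, 0],
        ![0, 6*β, 0, 0, 0, 0],
        ![0, 0, 6*γ, 0, 0, 0],
        ![0, 2*α, -2*α, 2*β, -2*γ, 0],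
        ![2*β, 0, -2*β, 2*α, 0, -2*γ],
        ![2*γ, -2*γ, 0, 0, 2*α, -2*β]] : Matrix (Fin 6) (Fin 6) ℂ).det = 0 := by
  simp [Matrix.det_succ_row_zero, Fin.sum_univ_succ]
  exact Or.inr (Or.inr (Or.inr (by ring)))

set_option maxHeartbeats 4000000 in
set_option maxRecDepth 8000 in
/-- The determinant of the matrix of second-order partials of the six cubics
defining the companion B₃ surface vanishes identically: the companion surface
X_{B₃}' is hypo-osculating, satisfying at least one Laplace equation of
order 2. -/
theorem companion_hessian_det_zero (α β γ : ℂ) :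
    (companionHessian ![α, β, γ]).det = 0 := by
  have h : companionHessian ![α, β, γ] =
      Matrix.of ![![6*α, 0, 0, 0, 0, 0],
        ![0, 6*β, 0, 0, 0, 0],
        ![0, 0, 6*γ, 0, 0, 0],
        ![0, 2*α, -2*α, 2*β, -2*γ, 0],
        ![2*β, 0, -2*β, 2*α, 0, -2*γ],
        ![2*γ, -2*γ, 0, 0, 2*α, -2*β]] := by
    ext i j
    fin_cases i <;> fin_cases j <;>
      · simp only [companionHessian, Matrix.of_apply, vec6_five,
          Matrix.cons_val_zero, Matrix.cons_val_one, Matrix.head_cons,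
          Matrix.cons_val_two, Matrix.cons_val_three, Matrix.cons_val_four,
          Matrix.tail_cons]
        simp [companionCubics, varPairs, pderiv_X, Pi.single_apply,
          pd_two, pd_three, vec6_five]
        try ring
  rw [h]
  exact det_aux α β γ
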